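/- arXiv:2301.06233 — 2 statements merged into one kernel-verified Lean document; each statement's English description precedes it below -/
import Mathlib

section
/- If μ is a finite Borel measure on a metric space X and there exists d ≥ 0 such that lim_{r→0} log μ(B(x, r))/log r = d for μ-almost every x, then dim_H μ = d, where dim_H μ = inf{dim_H Z : μ(X \ Z) = 0}. -/
/-!
For a.e. `x` and every `ε > 0`, the hypothesis gives `r ^ (d + ε) ≤ μ (B(x, r)) ≤ r ^ (d - ε)` for
all `r ≤ 1/(m+1)`, with `m` depending on `x`; so up to a null set `X` is a countable union of sets
on which these bounds hold uniformly. On a set where `μ (B(x, r)) ≤ r ^ s` and which has positive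
measure, the mass distribution principle `μ ≤ μH[s]` gives dimension at least `s`; on a set
where `r ^ s ≤ μ (B(x, r))`, a maximal `2r`-separated subset has at most `μ X / r ^ s` points, so
covering by the `2r`-balls around them bounds `μH[s]` by `4 ^ s μ X` and the dimension by `s`.
-/

open Set Filter MeasureTheory Metric
open scoped Topology ENNReal NNReal

lemma ENNReal.le_ofReal_of_forall_le_ofReal_add {a : ℝ≥0∞} {d : ℝ}
    (h : ∀ ε > 0, a ≤ ENNReal.ofReal (d + ε)) : a ≤ ENNReal.ofReal d :=
  ENNReal.le_of_forall_pos_le_add fun ε hε _ =>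
    (h ε hε).trans (ENNReal.ofReal_add_le.trans_eq (by rw [ENNReal.ofReal_coe_nnreal]))

lemma ENNReal.ofReal_le_of_forall_ofReal_sub_le {a : ℝ≥0∞} {d : ℝ}
    (h : ∀ ε > 0, ENNReal.ofReal (d - ε) ≤ a) : ENNReal.ofReal d ≤ a :=
  ENNReal.le_of_forall_pos_le_add fun ε hε _ =>
    calc ENNReal.ofReal d = ENNReal.ofReal (d - ε + ε) := by rw [sub_add_cancel]
      _ ≤ ENNReal.ofReal (d - ε) + ε :=
        ENNReal.ofReal_add_le.trans_eq (by rw [ENNReal.ofReal_coe_nnreal])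
      _ ≤ a + ε := by gcongr; exact h ε hε

lemma eventually_rpow_le_and_le_rpow_of_tendsto_log_div_log {f : ℝ → ℝ} {d ε : ℝ}
    (hpos : ∀ᶠ r in 𝓝[>] 0, 0 < f r)
    (hf : Tendsto (fun r => Real.log (f r) / Real.log r) (𝓝[>] 0) (𝓝 d)) (hε : 0 < ε) :
    ∀ᶠ r in 𝓝[>] 0, r ^ (d + ε) ≤ f r ∧ f r ≤ r ^ (d - ε) := by
  filter_upwards [hpos, hf.eventually (Ioo_mem_nhds (sub_lt_self d hε) (lt_add_of_pos_right d hε)),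
    Ioo_mem_nhdsGT one_pos] with r hfr ⟨hlo, hhi⟩ ⟨hr₀, hr₁⟩
  have hlog : Real.log r < 0 := Real.log_neg hr₀ hr₁
  constructor
  · rw [← Real.log_le_log_iff (by positivity) hfr, Real.log_rpow hr₀]
    nlinarith [(div_le_iff_of_neg hlog).1 hhi.le]
  · rw [← Real.log_le_log_iff hfr (by positivity), Real.log_rpow hr₀]
    nlinarith [(le_div_iff_of_neg hlog).1 hlo.le]

lemma Metric.finite_maximalSeparatedSet {X : Type*} [PseudoEMetricSpace X] (ε : ℝ≥0)
    (A : Set X) : (maximalSeparatedSet ε A).Finite := by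
  by_cases h : packingNumber ε A = ⊤
  · simp [maximalSeparatedSet, h]
  · rw [← encard_ne_top_iff, encard_maximalSeparatedSet h]
    exact h

section PseudoMetric

variable {X : Type*} [PseudoMetricSpace X] [MeasurableSpace X] (μ : Measure X) {A : Set X}

/-- The key estimate of the mass distribution principle: let the radius decrease to `ediam t`. -/
lemma measure_inter_le_ediam_rpow_of_measure_ball_le {s δ : ℝ} (hs : 0 ≤ s)
    (hA : ∀ x ∈ A, ∀ r ∈ Ioc 0 δ, μ (ball x r) ≤ ENNReal.ofReal (r ^ s))
    {t : Set X} (ht : ediam t < ENNReal.ofReal δ) : μ (t ∩ A) ≤ ediam t ^ s := by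
  obtain he | ⟨x, hxt, hxA⟩ := (t ∩ A).eq_empty_or_nonempty
  · simp [he]
  set D := (ediam t).toReal
  have hD : ediam t = ENNReal.ofReal D := (ENNReal.ofReal_toReal ht.ne_top).symm
  have hDδ : D < δ := by
    rw [hD] at ht
    exact (ENNReal.ofReal_lt_ofReal_iff_of_nonneg ENNReal.toReal_nonneg).1 ht
  have hbound : ∀ r ∈ Ioo D δ, μ (t ∩ A) ≤ ENNReal.ofReal (r ^ s) := fun r hr => by
    have hsub : t ∩ A ⊆ ball x r := fun y hy => by
      have : edist y x ≤ ENNReal.ofReal D := hD ▸ edist_le_ediam_of_mem hy.1 hxt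
      rw [edist_dist, ENNReal.ofReal_le_ofReal_iff ENNReal.toReal_nonneg] at this
      exact mem_ball.2 (this.trans_lt hr.1)
    exact (measure_mono hsub).trans
      (hA x hxA r ⟨ENNReal.toReal_nonneg.trans_lt hr.1, hr.2.le⟩)
  have hlim : Tendsto (fun r : ℝ => ENNReal.ofReal (r ^ s)) (𝓝[>] D)
      (𝓝 (ENNReal.ofReal (D ^ s))) :=
    ((ENNReal.continuous_ofReal.tendsto _).comp
      (Real.continuousAt_rpow_const D s (Or.inr hs)).tendsto).mono_left nhdsWithin_le_nhds
  rw [hD, ENNReal.ofReal_rpow_of_nonneg ENNReal.toReal_nonneg hs]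
  exact ge_of_tendsto hlim (eventually_of_mem (Ioo_mem_nhdsGT hDδ) hbound)

variable [OpensMeasurableSpace X]

lemma Metric.IsSeparated.encard_mul_le_measure_univ {C : Set X} {ρ : ℝ≥0} {c : ℝ≥0∞}
    (hC : IsSeparated (2 * ρ : ℝ≥0) C) (hc : ∀ x ∈ C, c ≤ μ (ball x ρ)) :
    C.encard * c ≤ μ univ :=
  calc C.encard * c = ∑' _ : C, c := (ENNReal.tsum_set_const C c).symm
    _ ≤ ∑' x : C, μ (ball x ρ) := ENNReal.tsum_le_tsum fun x => hc x x.2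
    _ ≤ μ (⋃ x : C, ball x ρ) :=
      tsum_meas_le_meas_iUnion_of_disjoint μ (fun _ => measurableSet_ball) fun x y hxy => by
        have h : ((2 * ρ : ℝ≥0) : ℝ≥0∞) < edist (x : X) y :=
          hC x.2 y.2 (Subtype.coe_ne_coe.2 hxy)
        rw [edist_nndist, ENNReal.coe_lt_coe, ← NNReal.coe_lt_coe, coe_nndist] at h
        exact ball_disjoint_ball (by push_cast at h; linarith)
    _ ≤ μ univ := measure_mono (subset_univ _)

lemma packingNumber_mul_le_measure_univ {ρ : ℝ≥0} {c : ℝ≥0∞}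
    (hc : ∀ x ∈ A, c ≤ μ (ball x ρ)) : packingNumber (2 * ρ) A * c ≤ μ univ := by
  simp only [packingNumber, ENat.toENNReal_iSup, ENNReal.iSup_mul, iSup_le_iff]
  exact fun C hCA hC => hC.encard_mul_le_measure_univ μ fun x hx => hc x (hCA hx)

end PseudoMetric

section Metric

variable {X : Type*} [MetricSpace X] [MeasurableSpace X] [BorelSpace X] (μ : Measure X)
  {A : Set X} {s δ : ℝ}

theorem measure_le_hausdorffMeasure_of_measure_ball_le (hs : 0 ≤ s) (hδ : 0 < δ)
    (hA : ∀ x ∈ A, ∀ r ∈ Ioc 0 δ, μ (ball x r) ≤ ENNReal.ofReal (r ^ s)) :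
    μ A ≤ μH[s] A := by
  have hle : OuterMeasure.restrict A μ.toOuterMeasure ≤ OuterMeasure.mkMetric (· ^ s) :=
    OuterMeasure.le_mkMetric _ _ (ENNReal.ofReal (δ / 2)) (by simp [hδ]) fun t ht => by
      simpa using measure_inter_le_ediam_rpow_of_measure_ball_le μ hs hA
        (ht.trans_lt ((ENNReal.ofReal_lt_ofReal_iff hδ).2 (half_lt_self hδ)))
  simpa [Measure.hausdorffMeasure, ← Measure.mkMetric_toOuterMeasure] using hle A

theorem le_dimH_of_measure_ball_le (hs : 0 ≤ s) (hδ : 0 < δ)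
    (hA : ∀ x ∈ A, ∀ r ∈ Ioc 0 δ, μ (ball x r) ≤ ENNReal.ofReal (r ^ s)) (hA₀ : μ A ≠ 0) :
    ENNReal.ofReal s ≤ dimH A := by
  refine le_dimH_of_hausdorffMeasure_ne_zero ?_
  rw [Real.coe_toNNReal s hs]
  exact fun h₀ => hA₀ <| le_zero_iff.1 <|
    h₀ ▸ measure_le_hausdorffMeasure_of_measure_ball_le μ hs hδ hA

theorem hausdorffMeasure_le_of_le_measure_ball [IsFiniteMeasure μ] (hs : 0 ≤ s) (hδ : 0 < δ)
    (hA : ∀ x ∈ A, ∀ r ∈ Ioc 0 δ, ENNReal.ofReal (r ^ s) ≤ μ (ball x r)) :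
    μH[s] A ≤ 4 ^ s * μ univ := by
  let C : ℝ≥0 → Set X := fun ρ => maximalSeparatedSet (2 * ρ) A
  have : ∀ ρ, Countable (C ρ) := fun ρ => (finite_maximalSeparatedSet _ A).countable.to_subtype
  have hball : ∀ ρ : ℝ≥0, 0 < ρ → (ρ : ℝ) ≤ δ → ∀ x ∈ A, (ρ : ℝ≥0∞) ^ s ≤ μ (ball x ρ) :=
    fun ρ hρ hρδ x hx => by
      simpa [← ENNReal.ofReal_rpow_of_nonneg ρ.coe_nonneg hs] using hA x hx ρ ⟨hρ, hρδ⟩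
  have hfin : ∀ ρ : ℝ≥0, 0 < ρ → (ρ : ℝ) ≤ δ → packingNumber (2 * ρ) A ≠ ⊤ :=
    fun ρ hρ hρδ htop => by
      have := packingNumber_mul_le_measure_univ μ (hball ρ hρ hρδ)
      rw [htop, ENat.toENNReal_top, ENNReal.top_mul (by positivity)] at this
      exact measure_ne_top μ univ (top_le_iff.1 this)
  have hsmall : ∀ᶠ ρ : ℝ≥0 in 𝓝[>] 0, 0 < ρ ∧ (ρ : ℝ) ≤ δ :=
    eventually_nhdsWithin_of_forall (fun ρ hρ => hρ) |>.and
      ((eventually_le_nhds (Real.toNNReal_pos.2 hδ)).filter_mono nhdsWithin_le_nhds |>.mono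
        fun ρ h => (Real.le_toNNReal_iff_coe_le hδ.le).1 h)
  refine (Measure.hausdorffMeasure_le_liminf_tsum s A (fun ρ : ℝ≥0 => 4 * ρ) ?_
    (fun ρ (x : C ρ) => closedEBall (x : X) (2 * ρ)) ?_ ?_).trans
    (liminf_le_of_frequently_le' (hsmall.mono ?_).frequently)
  · simpa using ENNReal.Tendsto.const_mul
      ((ENNReal.continuous_coe.tendsto' 0 0 rfl).mono_left nhdsWithin_le_nhds) (.inr (by simp))
  · exact Eventually.of_forall fun ρ x => ediam_closedEBall_le.trans_eq (by ring)
  · refine hsmall.mono fun ρ ⟨hρ, hρδ⟩ => ?_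
    have := isCover_iff_subset_iUnion_closedEBall.1 (isCover_maximalSeparatedSet (hfin ρ hρ hρδ))
    rwa [biUnion_eq_iUnion, ENNReal.coe_mul, ENNReal.coe_ofNat] at this
  · rintro ρ ⟨hρ, hρδ⟩
    calc ∑' x : C ρ, ediam (closedEBall (x : X) (2 * ρ)) ^ s
        ≤ ∑' _ : C ρ, (4 * (ρ : ℝ≥0∞)) ^ s := ENNReal.tsum_le_tsum fun x =>
          ENNReal.rpow_le_rpow (ediam_closedEBall_le.trans_eq (by ring)) hs
      _ = 4 ^ s * (packingNumber (2 * ρ) A * (ρ : ℝ≥0∞) ^ s) := by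
          rw [ENNReal.tsum_set_const, encard_maximalSeparatedSet (hfin ρ hρ hρδ),
            ENNReal.mul_rpow_of_nonneg _ _ hs]
          ring
      _ ≤ 4 ^ s * μ univ := by
          gcongr
          exact packingNumber_mul_le_measure_univ μ (hball ρ hρ hρδ)

theorem dimH_le_of_le_measure_ball [IsFiniteMeasure μ] (hs : 0 ≤ s) (hδ : 0 < δ)
    (hA : ∀ x ∈ A, ∀ r ∈ Ioc 0 δ, ENNReal.ofReal (r ^ s) ≤ μ (ball x r)) :
    dimH A ≤ ENNReal.ofReal s := by
  refine dimH_le_of_hausdorffMeasure_ne_top ?_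
  rw [Real.coe_toNNReal s hs]
  exact ne_top_of_le_ne_top (ENNReal.mul_ne_top (ENNReal.rpow_ne_top_of_nonneg hs (by simp))
    (measure_ne_top μ univ)) (hausdorffMeasure_le_of_le_measure_ball μ hs hδ hA)

end Metric

section LocalDimension

variable {X : Type*} [PseudoMetricSpace X] [MeasurableSpace X] (μ : Measure X)

def ballPowerBounds (s t δ : ℝ) : Set X :=
  {x | ∀ r ∈ Ioc 0 δ,
    ENNReal.ofReal (r ^ t) ≤ μ (ball x r) ∧ μ (ball x r) ≤ ENNReal.ofReal (r ^ s)}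

lemma eventually_measure_ball_between_rpow [IsFiniteMeasure μ] {x : X} {d ε : ℝ}
    (hx : x ∈ μ.support)
    (hdim : Tendsto (fun r => Real.log (μ (ball x r)).toReal / Real.log r) (𝓝[>] 0) (𝓝 d))
    (hε : 0 < ε) : ∀ᶠ r in 𝓝[>] 0, ENNReal.ofReal (r ^ (d + ε)) ≤ μ (ball x r) ∧
      μ (ball x r) ≤ ENNReal.ofReal (r ^ (d - ε)) := by
  have hpos : ∀ᶠ r in 𝓝[>] 0, 0 < (μ (ball x r)).toReal :=
    eventually_nhdsWithin_of_forall fun r hr => ENNReal.toReal_pos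
      (nhds_basis_ball.mem_measureSupport.1 hx r hr).ne' (measure_ne_top μ _)
  filter_upwards [eventually_rpow_le_and_le_rpow_of_tendsto_log_div_log hpos hdim hε,
    self_mem_nhdsWithin] with r ⟨hlo, hhi⟩ (hr : 0 < r)
  exact ⟨(ENNReal.ofReal_le_iff_le_toReal (measure_ne_top μ _)).2 hlo,
    (ENNReal.le_ofReal_iff_toReal_le (measure_ne_top μ _) (by positivity)).2 hhi⟩

lemma ae_mem_iUnion_ballPowerBounds [SecondCountableTopology X] [IsFiniteMeasure μ] {d ε : ℝ}
    (h : ∀ᵐ x ∂μ, Tendsto (fun r => Real.log (μ (ball x r)).toReal / Real.log r) (𝓝[>] 0) (𝓝 d))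
    (hε : 0 < ε) : ∀ᵐ x ∂μ, x ∈ ⋃ m : ℕ, ballPowerBounds μ (d - ε) (d + ε) ((m : ℝ) + 1)⁻¹ := by
  filter_upwards [h, Measure.support_mem_ae] with x hdim hx
  obtain ⟨δ, hδ, hbound⟩ :=
    (nhdsGT_basis 0).eventually_iff.1 (eventually_measure_ball_between_rpow μ hx hdim hε)
  obtain ⟨m, hm⟩ := exists_nat_one_div_lt hδ
  exact mem_iUnion.2 ⟨m, fun r hr => hbound ⟨hr.1, hr.2.trans_lt (by simpa using hm)⟩⟩

end LocalDimension

/-- Young's dimension criterion: if `μ` is a (nonzero) finite Borel measure on a metric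
space and the local dimension `lim_{r→0} log μ(B(x,r)) / log r` exists and equals `d` for
`μ`-a.e. `x`, then the Hausdorff dimension of `μ`
(`inf { dim_H Z : μ(X \ Z) = 0 }`) equals `d`. -/
theorem young_dimension_criterion
    {X : Type*} [MetricSpace X] [MeasurableSpace X] [BorelSpace X]
    [SecondCountableTopology X]
    (μ : Measure X) [IsFiniteMeasure μ] (hμ : μ ≠ 0)
    (d : ℝ) (hd : 0 ≤ d)
    (h : ∀ᵐ x ∂μ, Tendsto (fun r : ℝ => Real.log (μ (ball x r)).toReal / Real.log r)
      (𝓝[>] (0 : ℝ)) (𝓝 d)) :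
    (⨅ (Z : Set X) (_ : μ Zᶜ = 0), dimH Z) = ENNReal.ofReal d := by
  set G : ℝ → ℕ → Set X := fun ε m => ballPowerBounds μ (d - ε) (d + ε) ((m : ℝ) + 1)⁻¹
  have hG : ∀ ε > 0, μ (⋃ m, G ε m)ᶜ = 0 := fun ε hε => ae_mem_iUnion_ballPowerBounds μ h hε
  refine le_antisymm ?_ ?_
  · refine ENNReal.le_ofReal_of_forall_le_ofReal_add fun ε hε =>
      (iInf₂_le (⋃ m, G ε m) (hG ε hε)).trans ?_
    rw [dimH_iUnion]
    exact iSup_le fun m => dimH_le_of_le_measure_ball μ (by positivity) (by positivity)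
      fun x hx r hr => (hx r hr).1
  · refine le_iInf₂ fun Z hZ => ENNReal.ofReal_le_of_forall_ofReal_sub_le fun ε hε => ?_
    rcases le_total (d - ε) 0 with hdε | hdε
    · simp [ENNReal.ofReal_of_nonpos hdε]
    have hGZ : μ ((⋃ m, G ε m) ∩ Z) ≠ 0 := by
      rw [measure_inter_conull hZ, measure_congr (ae_eq_univ.2 (hG ε hε))]
      exact Measure.measure_univ_ne_zero.2 hμ
    obtain ⟨m, hm⟩ := exists_measure_pos_of_not_measure_iUnion_null (iUnion_inter Z _ ▸ hGZ)
    exact (le_dimH_of_measure_ball_le μ hdε (by positivity) (fun x hx r hr => (hx.1 r hr).2)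
      hm.ne').trans (dimH_mono inter_subset_right)
end

section
/- For subsets A of X and B of Y (metric spaces), the product set A × B (with the max metric) satisfies dim_H A + dim_H B ≤ dim_H(A × B) ≤ underline{dim}_B(A × B) ≤ overline{dim}_B(A × B) ≤ overline{dim}_B A + overline{dim}_B B. -/
/-!
The box-dimension bounds are elementary: products of `δ`-balls around `δ`-nets of `A` and of `B`
are `δ`-balls for the max metric, so `N_δ (A × B) ≤ N_δ A * N_δ B`; and along scales where
`N_δ Z ≤ δ ^ (-d)`, covering `Z` by `N_δ Z` balls of diameter `2 δ` gives `μH[d] Z ≤ 2 ^ d`.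

For `dim_H A + dim_H B ≤ dim_H (A × B)` take `β ≤ γ < α + β` with `μH[α] A = μH[β] B = ∞`, and a
cover `(U n)` of `A × B` by small sets, sorted by dyadic level `2⁻¹ ^ (k + 1) < diam U n ≤ 2⁻¹ ^ k`.
For `x ∈ A` the slices of the `U n` over `x` cover `B`, so their `β`-masses add up to at least `1`
and at some level `k` exceed a summable weight `w k`. The set `A_k` of such `x` is covered by the
`2⁻¹ ^ k`-balls around a maximal `2⁻¹ ^ k`-separated subset `P` (finite as `A` is totally
bounded), and a set of level `k` lies over at most one point of `P`; hence
`w k * 𝓗^α(A_k) ≲ ∑_{level k} diam (U n) ^ β`, and summing over `k` bounds `∑ diam (U n) ^ γ`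
from below by a constant independent of the cover.
-/

open Set Filter Metric
open scoped Topology ENNReal NNReal

/-- `coverNum Z δ` is the least number of balls of radius `δ` needed to cover `Z`. -/
noncomputable def coverNum {X : Type*} [MetricSpace X] (Z : Set X) (δ : ℝ) : ℕ :=
  sInf {n : ℕ | ∃ s : Finset X, s.card = n ∧ Z ⊆ ⋃ x ∈ s, Metric.ball x δ}

/-- Lower box dimension. -/
noncomputable def lowerBoxDim {X : Type*} [MetricSpace X] (Z : Set X) : ℝ≥0∞ :=
  Filter.liminf
    (fun δ : ℝ => ENNReal.ofReal (Real.log (coverNum Z δ) / (-Real.log δ)))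
    (𝓝[>] (0 : ℝ))

/-- Upper box dimension. -/
noncomputable def upperBoxDim {X : Type*} [MetricSpace X] (Z : Set X) : ℝ≥0∞ :=
  Filter.limsup
    (fun δ : ℝ => ENNReal.ofReal (Real.log (coverNum Z δ) / (-Real.log δ)))
    (𝓝[>] (0 : ℝ))

open MeasureTheory

namespace ENNReal

theorem rpow_le_rpow_of_nonpos {x y : ℝ≥0∞} {z : ℝ} (hxy : x ≤ y) (hz : z ≤ 0) :
    y ^ z ≤ x ^ z := by
  have h := ENNReal.inv_le_inv.2 (rpow_le_rpow hxy (neg_nonneg.2 hz))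
  rwa [← rpow_neg, ← rpow_neg, neg_neg] at h

theorem limsup_add_le_add_limsup {ι : Type*} (f : Filter ι) (u v : ι → ℝ≥0∞) :
    limsup (u + v) f ≤ limsup u f + limsup v f := by
  rcases eq_top_or_lt_top (limsup u f) with hu | hu
  · simp [hu]
  rcases eq_top_or_lt_top (limsup v f) with hv | hv
  · simp [hv]
  refine ENNReal.le_of_forall_pos_le_add fun ε hε _ => ?_
  have hε2 : (ε / 2 : ℝ≥0∞) ≠ 0 := by simpa using hε.ne'
  refine limsup_le_of_le (by isBoundedDefault) ?_
  filter_upwards [eventually_lt_of_limsup_lt (ENNReal.lt_add_right hu.ne hε2),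
    eventually_lt_of_limsup_lt (ENNReal.lt_add_right hv.ne hε2)] with x hux hvx
  calc u x + v x ≤ limsup u f + ε / 2 + (limsup v f + ε / 2) := add_le_add hux.le hvx.le
    _ = limsup u f + limsup v f + ε := by rw [add_add_add_comm, ENNReal.add_halves]

open Classical in
/-- The `k` with `2⁻¹ ^ (k + 1) < d ≤ 2⁻¹ ^ k` when `0 < d ≤ 1`; junk value `0` when `d = 0`. -/
noncomputable def dyadicLevel (d : ℝ≥0∞) : ℕ :=
  if h : ∃ k : ℕ, 2⁻¹ ^ (k + 1) < d then Nat.find h else 0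

theorem two_inv_pow_dyadicLevel_succ_lt {d : ℝ≥0∞} (hd : d ≠ 0) :
    2⁻¹ ^ (dyadicLevel d + 1) < d := by
  obtain ⟨n, hn⟩ := exists_inv_two_pow_lt hd
  have h : ∃ k : ℕ, (2⁻¹ : ℝ≥0∞) ^ (k + 1) < d :=
    ⟨n, (pow_le_pow_right_of_le_one' (by norm_num) n.le_succ).trans_lt hn⟩
  classical
  rw [dyadicLevel, dif_pos h]
  exact Nat.find_spec h

theorem le_two_inv_pow_dyadicLevel {d : ℝ≥0∞} (hd : d ≤ 1) : d ≤ 2⁻¹ ^ dyadicLevel d := by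
  classical
  by_cases h : ∃ k : ℕ, (2⁻¹ : ℝ≥0∞) ^ (k + 1) < d
  · rw [dyadicLevel, dif_pos h]
    rcases hk : Nat.find h with _ | k
    · simpa using hd
    · exact not_lt.1 (Nat.find_min h (hk ▸ k.lt_succ_self))
  · push Not at h
    obtain rfl : d = 0 := by
      by_contra hd0
      exact (two_inv_pow_dyadicLevel_succ_lt hd0).not_ge (h _)
    exact zero_le

end ENNReal

theorem TotallyBounded.prod {α β : Type*} [UniformSpace α] [UniformSpace β] {s : Set α}
    {t : Set β} (hs : TotallyBounded s) (ht : TotallyBounded t) : TotallyBounded (s ×ˢ t) := by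
  rw [totallyBounded_iff_ultrafilter] at hs ht ⊢
  intro f hf
  rw [cauchy_prod_iff]
  exact ⟨hs (f.map Prod.fst) ((map_mono hf).trans (by simpa using fst_image_prod_subset s t)),
    ht (f.map Prod.snd) ((map_mono hf).trans (by simpa using snd_image_prod_subset s t))⟩

section SeparatedSets

variable {X : Type*} [PseudoEMetricSpace X]

theorem TotallyBounded.packingNumber_ne_top {s : Set X} (hs : TotallyBounded s) {ε : ℝ≥0}
    (hε : ε ≠ 0) : packingNumber ε s ≠ ⊤ := by
  obtain ⟨N, -, hNfin, hN⟩ := exists_finite_isCover_of_totallyBounded (ε := ε / 2)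
    (div_ne_zero hε two_ne_zero) hs
  have h := (packingNumber_two_mul_le_externalCoveringNumber (ε / 2) s).trans
    hN.externalCoveringNumber_le_encard
  rw [mul_div_cancel₀ _ two_ne_zero] at h
  exact ne_top_of_le_ne_top (encard_ne_top_iff.2 hNfin) h

theorem TotallyBounded.exists_finset_isSeparated_subset_iUnion {s : Set X}
    (hs : TotallyBounded s) {ε : ℝ≥0} (hε : ε ≠ 0) :
    ∃ P : Finset X, ↑P ⊆ s ∧ IsSeparated ε (P : Set X) ∧ s ⊆ ⋃ p ∈ P, closedEBall p ε := by
  have hpack := hs.packingNumber_ne_top hε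
  have hfin : (maximalSeparatedSet ε s).Finite := by
    rw [← encard_ne_top_iff, encard_maximalSeparatedSet hpack]
    exact hpack
  refine ⟨hfin.toFinset, by simpa using maximalSeparatedSet_subset, by
    simpa using isSeparated_maximalSeparatedSet, ?_⟩
  simpa [← isCover_iff_subset_iUnion_closedEBall] using isCover_maximalSeparatedSet hpack

open Classical in
theorem Metric.IsSeparated.sum_ite_mem_le {P : Finset X} {δ : ℝ≥0∞}
    (hP : IsSeparated δ (P : Set X)) {s : Set X} (hs : ediam s ≤ δ) (c : ℝ≥0∞) :
    ∑ p ∈ P, (if p ∈ s then c else 0) ≤ c := by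
  rw [← Finset.sum_filter, Finset.sum_const, nsmul_eq_mul]
  have hcard : (P.filter (· ∈ s)).card ≤ 1 := by
    refine Finset.card_le_one.2 fun p hp q hq => ?_
    simp only [Finset.mem_filter] at hp hq
    by_contra hpq
    exact (hP hp.1 hq.1 hpq).not_ge ((edist_le_ediam_of_mem hp.2 hq.2).trans hs)
  calc ((P.filter (· ∈ s)).card : ℝ≥0∞) * c ≤ 1 * c := by gcongr; exact_mod_cast hcard
    _ = c := one_mul c

end SeparatedSets

section HausdorffPre

open OuterMeasure

variable {X : Type*} [EMetricSpace X]

/-- The approximate Hausdorff outer measure `𝓗^d_r`. -/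
noncomputable abbrev hausdorffPre (d : ℝ) (r : ℝ≥0∞) : OuterMeasure X :=
  mkMetric'.pre (fun t : Set X => ediam t ^ d) r

theorem hausdorffPre_le_tsum {ι : Type*} [Countable ι] {d : ℝ} {r : ℝ≥0∞} {s : Set X}
    (t : ι → Set X) (hst : s ⊆ ⋃ i, t i) (ht : ∀ i, ediam (t i) ≤ r) :
    hausdorffPre d r s ≤ ∑' i, ediam (t i) ^ d :=
  calc hausdorffPre d r s ≤ ∑' i, hausdorffPre d r (t i) :=
        (measure_mono hst).trans (measure_iUnion_le t)
    _ ≤ ∑' i, ediam (t i) ^ d := ENNReal.tsum_le_tsum fun i => mkMetric'.pre_le (ht i)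

variable [MeasurableSpace X] [BorelSpace X]

theorem hausdorffMeasure_eq_iSup_hausdorffPre (d : ℝ) (s : Set X) :
    μH[d] s = ⨆ (r : ℝ≥0∞) (_ : 0 < r), hausdorffPre d r s := by
  rw [Measure.hausdorffMeasure, ← Measure.coe_toOuterMeasure, Measure.mkMetric_toOuterMeasure,
    OuterMeasure.mkMetric, OuterMeasure.mkMetric']
  simp only [OuterMeasure.iSup_apply]

theorem exists_one_le_hausdorffPre_of_hausdorffMeasure_eq_top {d : ℝ} {s : Set X}
    (h : μH[d] s = ∞) : ∃ r, 0 < r ∧ 1 ≤ hausdorffPre d r s := by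
  by_contra! hlt
  have : μH[d] s ≤ 1 := by
    rw [hausdorffMeasure_eq_iSup_hausdorffPre]
    exact iSup₂_le fun r hr => (hlt r hr).le
  simp [h] at this

theorem le_hausdorffMeasure_of_forall_cover {d : ℝ} (hd : 0 < d) {s : Set X} {r c : ℝ≥0∞}
    (hr : 0 < r)
    (h : ∀ t : ℕ → Set X, s ⊆ ⋃ n, t n → (∀ n, ediam (t n) ≤ r) → c ≤ ∑' n, ediam (t n) ^ d) :
    c ≤ μH[d] s := by
  rw [Measure.hausdorffMeasure_apply]
  refine le_iSup₂_of_le r hr (le_iInf fun t => le_iInf₂ fun hst ht => (h t hst ht).trans ?_)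
  refine ENNReal.tsum_le_tsum fun n => ?_
  rcases (t n).eq_empty_or_nonempty with hn | hn
  · simp [hn, ENNReal.zero_rpow_of_pos hd]
  · exact le_iSup (fun _ : (t n).Nonempty => ediam (t n) ^ d) hn

end HausdorffPre

open ENNReal

section LevelSum

variable {Z : Type*} [PseudoEMetricSpace Z]

noncomputable def levelSum (U : ℕ → Set Z) (f : ℕ → ℝ≥0∞) (k : ℕ) : ℝ≥0∞ :=
  ∑' n, if dyadicLevel (ediam (U n)) = k then f n else 0

theorem tsum_levelSum (U : ℕ → Set Z) (f : ℕ → ℝ≥0∞) : ∑' k, levelSum U f k = ∑' n, f n := by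
  simp only [levelSum]
  rw [ENNReal.tsum_comm]
  simp_rw [eq_comm (a := dyadicLevel _), tsum_ite_eq]

theorem exists_of_levelSum_ne_zero {U : ℕ → Set Z} {f : ℕ → ℝ≥0∞} {k : ℕ}
    (h : levelSum U f k ≠ 0) : ∃ n, dyadicLevel (ediam (U n)) = k ∧ f n ≠ 0 := by
  by_contra! H
  exact h (ENNReal.tsum_eq_zero.2 fun n => by split_ifs with hn; exacts [H n hn, rfl])

theorem levelSum_rpow_le {U : ℕ → Set Z} (hU : ∀ n, ediam (U n) ≠ ∞) {β γ : ℝ} (hβ : 0 < β)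
    (hβγ : β ≤ γ) (k : ℕ) :
    levelSum U (fun n => ediam (U n) ^ β) k ≤
      (2⁻¹ ^ (k + 1)) ^ (β - γ) * levelSum U (fun n => ediam (U n) ^ γ) k := by
  rw [levelSum, levelSum, ← ENNReal.tsum_mul_left]
  refine ENNReal.tsum_le_tsum fun n => ?_
  split_ifs with hn
  · rcases eq_or_ne (ediam (U n)) 0 with h0 | h0
    · simp [h0, zero_rpow_of_pos hβ]
    calc ediam (U n) ^ β = ediam (U n) ^ (β - γ) * ediam (U n) ^ γ := by
          rw [← rpow_add _ _ h0 (hU n), sub_add_cancel]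
      _ ≤ (2⁻¹ ^ (k + 1)) ^ (β - γ) * ediam (U n) ^ γ :=
          mul_le_mul_left (rpow_le_rpow_of_nonpos
            (hn ▸ two_inv_pow_dyadicLevel_succ_lt h0).le (sub_nonpos.2 hβγ)) _
  · simp

end LevelSum

/-- `(2 * 2⁻¹ ^ k) ^ α` bounds the `α`-mass of a ball of radius `2⁻¹ ^ k`; for `e = β - γ` the
factor `(2⁻¹ ^ (k + 1)) ^ e` converts `β`-masses of sets of level `k` into `γ`-masses. -/
noncomputable def dyadicWeight (α e : ℝ) (k : ℕ) : ℝ≥0∞ :=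
  (2 * 2⁻¹ ^ k) ^ α * (2⁻¹ ^ (k + 1)) ^ e

theorem dyadicWeight_ne_zero {α : ℝ} (hα : 0 ≤ α) (e : ℝ) (k : ℕ) :
    dyadicWeight α e k ≠ 0 := by
  simp [dyadicWeight, hα]

theorem dyadicWeight_ne_top {α : ℝ} (hα : 0 ≤ α) (e : ℝ) (k : ℕ) :
    dyadicWeight α e k ≠ ∞ :=
  mul_ne_top (rpow_ne_top_of_nonneg hα (by finiteness))
    (rpow_ne_top_of_nonneg' (ENNReal.pow_pos (by norm_num) _) (by finiteness))

theorem tsum_dyadicWeight_ne_top {α e : ℝ} (hα : 0 ≤ α) (he : 0 < α + e) :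
    ∑' k, dyadicWeight α e k ≠ ∞ := by
  have hq : (2⁻¹ : ℝ≥0∞) ^ (α + e) < 1 := rpow_lt_one (by norm_num) he
  have hterm : ∀ k, dyadicWeight α e k = 2 ^ α * 2⁻¹ ^ e * (2⁻¹ ^ (α + e)) ^ k := fun k => by
    have hpow : ∀ x : ℝ, ((2⁻¹ : ℝ≥0∞) ^ k) ^ x = (2⁻¹ ^ x) ^ k := fun x => by
      rw [← rpow_natCast, ← rpow_natCast, ← rpow_mul, ← rpow_mul, mul_comm]
    rw [dyadicWeight, pow_succ', mul_rpow_of_ne_top (by norm_num) (pow_ne_top (by norm_num)),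
      mul_rpow_of_ne_top (by norm_num) (pow_ne_top (by norm_num)), hpow, hpow,
      rpow_add _ _ (by norm_num) (by norm_num), mul_pow]
    ring
  simp_rw [hterm, ENNReal.tsum_mul_left, tsum_geometric]
  refine mul_ne_top (mul_ne_top ?_ ?_) (inv_ne_top.2 (tsub_pos_of_lt hq).ne')
  · exact rpow_ne_top_of_nonneg hα (by norm_num)
  · exact rpow_ne_top_of_nonneg' (by norm_num) (by norm_num)

theorem ENNReal.tsum_inv_two_mul_tsum_mul_lt_one {w : ℕ → ℝ≥0∞} (h0 : ∑' k, w k ≠ 0)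
    (htop : ∑' k, w k ≠ ∞) : ∑' k, (2 * ∑' j, w j)⁻¹ * w k < 1 := by
  rw [ENNReal.tsum_mul_left, ENNReal.mul_inv (Or.inl two_ne_zero) (Or.inl ofNat_ne_top), mul_assoc,
    ENNReal.inv_mul_cancel h0 htop, mul_one]
  norm_num

section ProductCover

variable {X Y : Type*} [EMetricSpace X] [EMetricSpace Y]

open Classical in
noncomputable def sliceMass (U : ℕ → Set (X × Y)) (β : ℝ) (x : X) (n : ℕ) : ℝ≥0∞ :=
  if x ∈ Prod.fst '' U n then ediam (U n) ^ β else 0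

theorem one_le_tsum_sliceMass {A : Set X} {B : Set Y} {β : ℝ} (hβ : 0 < β) {r : ℝ≥0∞}
    (hB : 1 ≤ hausdorffPre β r B) {U : ℕ → Set (X × Y)} (hU : A ×ˢ B ⊆ ⋃ n, U n)
    (hUr : ∀ n, ediam (U n) ≤ r) {x : X} (hx : x ∈ A) : 1 ≤ ∑' n, sliceMass U β x n := by
  have hslice : ∀ n, ediam (Prod.mk x ⁻¹' U n) ≤ ediam (U n) := fun n =>
    ediam_le fun y hy y' hy' => by
      simpa [Prod.edist_eq] using edist_le_ediam_of_mem (mem_preimage.1 hy) hy'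
  calc 1 ≤ hausdorffPre β r B := hB
    _ ≤ ∑' n, ediam (Prod.mk x ⁻¹' U n) ^ β :=
      hausdorffPre_le_tsum _ (fun y hy => by simpa using hU (mk_mem_prod hx hy))
        fun n => (hslice n).trans (hUr n)
    _ ≤ _ := ENNReal.tsum_le_tsum fun n => by
      rw [sliceMass]
      split_ifs with h
      · exact rpow_le_rpow (hslice n) hβ.le
      · have : Prod.mk x ⁻¹' U n = ∅ :=
          eq_empty_of_forall_notMem fun y hy => h ⟨(x, y), hy, rfl⟩
        simp [this, zero_rpow_of_pos hβ]

/-- A set of level `k` meets the vertical lines through at most one point of a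
`2⁻¹ ^ k`-separated set. -/
theorem sum_levelSum_sliceMass_le {P : Finset X} {k : ℕ} (hP : IsSeparated (2⁻¹ ^ k) (P : Set X))
    {U : ℕ → Set (X × Y)} (hU : ∀ n, ediam (U n) ≤ 1) (β : ℝ) :
    ∑ p ∈ P, levelSum U (sliceMass U β p) k ≤ levelSum U (fun n => ediam (U n) ^ β) k := by
  simp only [levelSum, sliceMass]
  rw [← Summable.tsum_finsetSum fun _ _ => ENNReal.summable]
  refine ENNReal.tsum_le_tsum fun n => ?_
  by_cases hn : dyadicLevel (ediam (U n)) = k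
  · simp only [hn, if_true]
    refine hP.sum_ite_mem_le ?_ _
    calc ediam (Prod.fst '' U n) ≤ ediam (U n) := by
          simpa using LipschitzWith.prod_fst.ediam_image_le (U n)
      _ ≤ 2⁻¹ ^ k := hn ▸ le_two_inv_pow_dyadicLevel (hU n)
  · simp [hn]

theorem two_mul_two_inv_pow_le_of_levelSum_sliceMass_ne_zero {U : ℕ → Set (X × Y)} {β : ℝ}
    (hβ : 0 < β) {r : ℝ≥0∞} (hUr : ∀ n, ediam (U n) ≤ r / 4) {x : X} {k : ℕ}
    (h : levelSum U (sliceMass U β x) k ≠ 0) : 2 * 2⁻¹ ^ k ≤ r := by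
  obtain ⟨n, hn, hxn⟩ := exists_of_levelSum_ne_zero h
  have h0 : ediam (U n) ≠ 0 := by
    rintro h0
    simp [sliceMass, h0, zero_rpow_of_pos hβ] at hxn
  calc 2 * 2⁻¹ ^ k = 4 * 2⁻¹ ^ (k + 1) := by
        rw [pow_succ, mul_comm _ 2⁻¹, ← mul_assoc, show (4 : ℝ≥0∞) = 2 * 2 by norm_num,
          mul_assoc 2, ENNReal.mul_inv_cancel two_ne_zero ofNat_ne_top, mul_one]
    _ ≤ 4 * (r / 4) := by
        gcongr
        exact (hn ▸ two_inv_pow_dyadicLevel_succ_lt h0).le.trans (hUr n)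
    _ = r := ENNReal.mul_div_cancel (by norm_num) (by norm_num)

/-- Cover the points of `A` with slice mass at least `b` at level `k` by `2⁻¹ ^ k`-balls around
a maximal `2⁻¹ ^ k`-separated subset `P`, and count `P` through its slice masses. -/
theorem mul_hausdorffPre_le_levelSum {A : Set X} (hA : TotallyBounded A) {α β : ℝ} (hα : 0 ≤ α)
    (hβ : 0 < β) {r : ℝ≥0∞} {U : ℕ → Set (X × Y)} (hUr : ∀ n, ediam (U n) ≤ r / 4)
    (hU1 : ∀ n, ediam (U n) ≤ 1) {b : ℝ≥0∞} (hb : b ≠ 0) (k : ℕ) :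
    b * hausdorffPre α r {x ∈ A | b ≤ levelSum U (sliceMass U β x) k} ≤
      (2 * 2⁻¹ ^ k) ^ α * levelSum U (fun n => ediam (U n) ^ β) k := by
  set Ak := {x ∈ A | b ≤ levelSum U (sliceMass U β x) k}
  rcases Ak.eq_empty_or_nonempty with hAk | ⟨x, -, hx⟩
  · simp [hAk]
  have hr := two_mul_two_inv_pow_le_of_levelSum_sliceMass_ne_zero hβ hUr
    (ne_bot_of_le_ne_bot hb hx)
  obtain ⟨P, hPA, hPsep, hAP⟩ :=
    (hA.subset (sep_subset A _)).exists_finset_isSeparated_subset_iUnion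
      (ε := 2⁻¹ ^ k) (pow_ne_zero _ (by norm_num))
  have hcoe : (((2⁻¹ : ℝ≥0) ^ k : ℝ≥0) : ℝ≥0∞) = 2⁻¹ ^ k := by push_cast; simp
  rw [hcoe] at hPsep hAP
  have hpre : hausdorffPre α r Ak ≤ P.card * (2 * 2⁻¹ ^ k) ^ α :=
    calc hausdorffPre α r Ak ≤ ∑ p ∈ P, hausdorffPre α r (closedEBall p (2⁻¹ ^ k)) :=
          (measure_mono hAP).trans (measure_biUnion_finset_le _ _)
      _ ≤ ∑ _p ∈ P, (2 * 2⁻¹ ^ k) ^ α := Finset.sum_le_sum fun p _ =>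
          (OuterMeasure.mkMetric'.pre_le (ediam_closedEBall_le.trans hr)).trans
            (rpow_le_rpow ediam_closedEBall_le hα)
      _ = P.card * (2 * 2⁻¹ ^ k) ^ α := by rw [Finset.sum_const, nsmul_eq_mul]
  have hcount : P.card * b ≤ levelSum U (fun n => ediam (U n) ^ β) k :=
    calc P.card * b = ∑ _p ∈ P, b := by rw [Finset.sum_const, nsmul_eq_mul]
      _ ≤ ∑ p ∈ P, levelSum U (sliceMass U β p) k := Finset.sum_le_sum fun p hp => (hPA hp).2
      _ ≤ _ := sum_levelSum_sliceMass_le hPsep hU1 β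
  calc b * hausdorffPre α r Ak ≤ b * (P.card * (2 * 2⁻¹ ^ k) ^ α) := by gcongr
    _ = (2 * 2⁻¹ ^ k) ^ α * (P.card * b) := by ring
    _ ≤ _ := by gcongr

theorem subset_iUnion_le_levelSum_sliceMass {A : Set X} {B : Set Y} {β : ℝ} (hβ : 0 < β)
    {r : ℝ≥0∞} (hB : 1 ≤ hausdorffPre β r B) {U : ℕ → Set (X × Y)} (hU : A ×ˢ B ⊆ ⋃ n, U n)
    (hUr : ∀ n, ediam (U n) ≤ r) {b : ℕ → ℝ≥0∞} (hb : ∑' k, b k < 1) :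
    A ⊆ ⋃ k, {x ∈ A | b k ≤ levelSum U (sliceMass U β x) k} := by
  intro x hx
  by_contra hnot
  simp only [mem_iUnion, mem_ofPred_eq, not_exists, not_and, not_le] at hnot
  refine hb.not_ge ?_
  calc 1 ≤ ∑' n, sliceMass U β x n := one_le_tsum_sliceMass hβ hB hU hUr hx
    _ = ∑' k, levelSum U (sliceMass U β x) k := (tsum_levelSum _ _).symm
    _ ≤ ∑' k, b k := ENNReal.tsum_le_tsum fun k => (hnot k hx).le

theorem inv_two_mul_tsum_dyadicWeight_le_tsum {A : Set X} {B : Set Y} (hA : TotallyBounded A)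
    {α β γ : ℝ} (hβ : 0 < β) (hβγ : β ≤ γ) (hγ : γ < α + β) {rA rB : ℝ≥0∞}
    (hAr : 1 ≤ hausdorffPre α rA A) (hBr : 1 ≤ hausdorffPre β rB B) {U : ℕ → Set (X × Y)}
    (hU : A ×ˢ B ⊆ ⋃ n, U n) (hUr : ∀ n, ediam (U n) ≤ min (min (rA / 4) rB) 1) :
    (2 * ∑' k, dyadicWeight α (β - γ) k)⁻¹ ≤ ∑' n, ediam (U n) ^ γ := by
  set w := dyadicWeight α (β - γ)
  set c := (2 * ∑' k, w k)⁻¹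
  have hα : 0 ≤ α := by linarith
  have hw0 : ∀ k, w k ≠ 0 := dyadicWeight_ne_zero hα (β - γ)
  have hWtop : ∑' k, w k ≠ ∞ := tsum_dyadicWeight_ne_top hα (by linarith)
  have hc0 : c ≠ 0 := ENNReal.inv_ne_zero.2 (mul_ne_top ofNat_ne_top hWtop)
  have hcw : ∑' k, c * w k < 1 := ENNReal.tsum_inv_two_mul_tsum_mul_lt_one
    (fun h => hw0 0 (ENNReal.tsum_eq_zero.1 h 0)) hWtop
  have hUA : ∀ n, ediam (U n) ≤ rA / 4 := fun n =>
    (hUr n).trans ((min_le_left _ _).trans (min_le_left _ _))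
  have hUB : ∀ n, ediam (U n) ≤ rB := fun n =>
    (hUr n).trans ((min_le_left _ _).trans (min_le_right _ _))
  have hU1 : ∀ n, ediam (U n) ≤ 1 := fun n => (hUr n).trans (min_le_right _ _)
  set Ak : ℕ → Set X := fun k => {x ∈ A | c * w k ≤ levelSum U (sliceMass U β x) k}
  have hlevel : ∀ k, c * hausdorffPre α rA (Ak k) ≤ levelSum U (fun n => ediam (U n) ^ γ) k := by
    intro k
    refine (ENNReal.mul_le_mul_iff_right (hw0 k) (dyadicWeight_ne_top hα (β - γ) k)).1 ?_
    rw [← mul_assoc, mul_comm (w k) c]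
    refine (mul_hausdorffPre_le_levelSum hA hα hβ hUA hU1 (mul_ne_zero hc0 (hw0 k)) k).trans ?_
    rw [show w k = (2 * 2⁻¹ ^ k) ^ α * (2⁻¹ ^ (k + 1)) ^ (β - γ) from rfl, mul_assoc]
    exact mul_le_mul_right
      (levelSum_rpow_le (fun n => ne_top_of_le_ne_top one_ne_top (hU1 n)) hβ hβγ k) _
  calc c = c * 1 := (mul_one c).symm
    _ ≤ c * hausdorffPre α rA A := by gcongr
    _ ≤ c * ∑' k, hausdorffPre α rA (Ak k) := by
        gcongr
        exact (measure_mono (subset_iUnion_le_levelSum_sliceMass hβ hBr hU hUB hcw)).trans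
          (measure_iUnion_le _)
    _ = ∑' k, c * hausdorffPre α rA (Ak k) := ENNReal.tsum_mul_left.symm
    _ ≤ ∑' k, levelSum U (fun n => ediam (U n) ^ γ) k := ENNReal.tsum_le_tsum hlevel
    _ = ∑' n, ediam (U n) ^ γ := tsum_levelSum _ _

end ProductCover

section HausdorffDimension

variable {X Y : Type*} [EMetricSpace X] [EMetricSpace Y]

theorem dimH_le_dimH_prod_left {A : Set X} {B : Set Y} (hB : B.Nonempty) :
    dimH A ≤ dimH (A ×ˢ B) := by
  obtain ⟨b, hb⟩ := hB
  have hiso : Isometry fun x : X => (x, b) := fun x x' => by simp [Prod.edist_eq]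
  calc dimH A = dimH ((fun x : X => (x, b)) '' A) := (hiso.dimH_image A).symm
    _ ≤ dimH (A ×ˢ B) := dimH_mono (image_subset_iff.2 fun _ hx => ⟨hx, hb⟩)

theorem dimH_le_dimH_prod_right {A : Set X} {B : Set Y} (hA : A.Nonempty) :
    dimH B ≤ dimH (A ×ˢ B) := by
  obtain ⟨a, ha⟩ := hA
  have hiso : Isometry fun y : Y => (a, y) := fun y y' => by simp [Prod.edist_eq]
  calc dimH B = dimH ((fun y : Y => (a, y)) '' B) := (hiso.dimH_image B).symm
    _ ≤ dimH (A ×ˢ B) := dimH_mono (image_subset_iff.2 fun _ hy => ⟨ha, hy⟩)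

theorem le_dimH_prod_of_lt {A : Set X} {B : Set Y} (hA : TotallyBounded A) {α β γ : ℝ≥0}
    (hβ : 0 < β) (hβγ : β ≤ γ) (hγ : γ < α + β) (hαA : (α : ℝ≥0∞) < dimH A)
    (hβB : (β : ℝ≥0∞) < dimH B) : (γ : ℝ≥0∞) ≤ dimH (A ×ˢ B) := by
  borelize X Y (X × Y)
  obtain ⟨rA, hrA, hAr⟩ :=
    exists_one_le_hausdorffPre_of_hausdorffMeasure_eq_top (hausdorffMeasure_of_lt_dimH hαA)
  obtain ⟨rB, hrB, hBr⟩ :=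
    exists_one_le_hausdorffPre_of_hausdorffMeasure_eq_top (hausdorffMeasure_of_lt_dimH hβB)
  have hr : 0 < min (min (rA / 4) rB) 1 :=
    lt_min (lt_min (ENNReal.div_pos hrA.ne' ofNat_ne_top) hrB) one_pos
  have hγ' : (γ : ℝ) < α + β := by exact_mod_cast hγ
  refine le_dimH_of_hausdorffMeasure_ne_zero (ne_of_gt (lt_of_lt_of_le ?_
    (le_hausdorffMeasure_of_forall_cover (hβ.trans_le hβγ) hr fun U hU hUr =>
      inv_two_mul_tsum_dyadicWeight_le_tsum hA hβ hβγ hγ' hAr hBr hU hUr)))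
  exact ENNReal.inv_pos.2 (mul_ne_top ofNat_ne_top
    (tsum_dyadicWeight_ne_top α.coe_nonneg (by rw [← add_sub_assoc]; exact sub_pos.2 hγ')))

theorem dimH_add_le_dimH_prod {A : Set X} {B : Set Y} (hA : A.Nonempty) (hB : B.Nonempty)
    (hAb : TotallyBounded A) : dimH A + dimH B ≤ dimH (A ×ˢ B) := by
  refine ENNReal.le_of_forall_nnreal_lt fun γ hγ => ?_
  rcases lt_or_ge (γ : ℝ≥0∞) (dimH B) with hγB | hBγ
  · exact hγB.le.trans (dimH_le_dimH_prod_right hA)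
  rcases eq_or_ne (dimH B) 0 with hB0 | hB0
  · rw [hB0, add_zero] at hγ
    exact hγ.le.trans (dimH_le_dimH_prod_left hB)
  have hA0 : dimH A ≠ 0 := by
    rintro hA0
    rw [hA0, zero_add] at hγ
    exact hγ.not_ge hBγ
  obtain ⟨a, haA, b, hbB, hγab⟩ := ENNReal.exists_lt_add_of_lt_add hγ hA0 hB0
  obtain ⟨β, hbβ, hβB⟩ := ENNReal.lt_iff_exists_nnreal_btwn.1 hbB
  lift a to ℝ≥0 using haA.ne_top
  have hγβ : (γ : ℝ≥0∞) < a + β := hγab.trans_le (by gcongr)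
  refine le_dimH_prod_of_lt hAb (ENNReal.coe_pos.1 (pos_of_gt hbβ)) ?_ (by exact_mod_cast hγβ)
    haA hβB
  exact_mod_cast hβB.le.trans hBγ

end HausdorffDimension

section BoxDimension

variable {X Y : Type*} [MetricSpace X] [MetricSpace Y]

theorem coverNum_le {Z : Set X} {δ : ℝ} {s : Finset X} (h : Z ⊆ ⋃ x ∈ s, ball x δ) :
    coverNum Z δ ≤ s.card :=
  Nat.sInf_le ⟨s, rfl, h⟩

theorem TotallyBounded.exists_finset_card_eq_coverNum {Z : Set X} (hZ : TotallyBounded Z)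
    {δ : ℝ} (hδ : 0 < δ) : ∃ s : Finset X, s.card = coverNum Z δ ∧ Z ⊆ ⋃ x ∈ s, ball x δ := by
  obtain ⟨t, ht, hZt⟩ := totallyBounded_iff.1 hZ δ hδ
  exact Nat.sInf_mem (s := {n | ∃ s : Finset X, s.card = n ∧ Z ⊆ ⋃ x ∈ s, ball x δ})
    ⟨_, ht.toFinset, rfl, by simpa using hZt⟩

theorem TotallyBounded.coverNum_pos {Z : Set X} (hZ : TotallyBounded Z) (hne : Z.Nonempty)
    {δ : ℝ} (hδ : 0 < δ) : 0 < coverNum Z δ := by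
  obtain ⟨s, hs, hZs⟩ := hZ.exists_finset_card_eq_coverNum hδ
  obtain ⟨z, hz⟩ := hne
  obtain ⟨x, hx, -⟩ := mem_iUnion₂.1 (hZs hz)
  exact hs ▸ Finset.card_pos.2 ⟨x, hx⟩

theorem coverNum_prod_le {A : Set X} {B : Set Y} (hA : TotallyBounded A) (hB : TotallyBounded B)
    {δ : ℝ} (hδ : 0 < δ) : coverNum (A ×ˢ B) δ ≤ coverNum A δ * coverNum B δ := by
  obtain ⟨s, hs, hAs⟩ := hA.exists_finset_card_eq_coverNum hδ
  obtain ⟨t, ht, hBt⟩ := hB.exists_finset_card_eq_coverNum hδ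
  rw [← hs, ← ht, ← Finset.card_product]
  refine coverNum_le ?_
  rintro ⟨a, b⟩ ⟨ha, hb⟩
  obtain ⟨x, hx, hax⟩ := mem_iUnion₂.1 (hAs ha)
  obtain ⟨y, hy, hby⟩ := mem_iUnion₂.1 (hBt hb)
  exact mem_iUnion₂.2 ⟨(x, y), Finset.mk_mem_product hx hy, by
    rw [← ball_prod_same]; exact ⟨hax, hby⟩⟩

theorem upperBoxDim_prod_le {A : Set X} {B : Set Y} (hA : A.Nonempty) (hB : B.Nonempty)
    (hAb : TotallyBounded A) (hBb : TotallyBounded B) :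
    upperBoxDim (A ×ˢ B) ≤ upperBoxDim A + upperBoxDim B := by
  refine (limsup_le_limsup ?_).trans (ENNReal.limsup_add_le_add_limsup _ _ _)
  filter_upwards [Ioo_mem_nhdsGT (zero_lt_one' ℝ)] with δ ⟨hδ0, hδ1⟩
  have hlog : 0 < -Real.log δ := neg_pos.2 (Real.log_neg hδ0 hδ1)
  have hNA : (1 : ℝ) ≤ coverNum A δ := by exact_mod_cast hAb.coverNum_pos hA hδ0
  have hNB : (1 : ℝ) ≤ coverNum B δ := by exact_mod_cast hBb.coverNum_pos hB hδ0
  have hNAB : (0 : ℝ) < coverNum (A ×ˢ B) δ := by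
    exact_mod_cast (hAb.prod hBb).coverNum_pos (hA.prod hB) hδ0
  rw [Pi.add_apply, ← ENNReal.ofReal_add (div_nonneg (Real.log_nonneg hNA) hlog.le)
    (div_nonneg (Real.log_nonneg hNB) hlog.le), ← add_div,
    ← Real.log_mul (by positivity) (by positivity)]
  gcongr
  exact_mod_cast coverNum_prod_le hAb hBb hδ0

theorem natCast_mul_ofReal_rpow_le_one {N : ℕ} {δ d : ℝ} (hN : 0 < N) (hδ0 : 0 < δ)
    (hδ1 : δ < 1) (h : Real.log N / -Real.log δ < d) : (N : ℝ≥0∞) * ENNReal.ofReal δ ^ d ≤ 1 := by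
  have hlog : Real.log N + Real.log δ * d < 0 := by
    have := (div_lt_iff₀ (neg_pos.2 (Real.log_neg hδ0 hδ1))).1 h
    linarith
  have hreal : (N : ℝ) * δ ^ d ≤ 1 := by
    rw [Real.rpow_def_of_pos hδ0, ← Real.exp_log (Nat.cast_pos.2 hN), ← Real.exp_add]
    exact Real.exp_le_one_iff.2 hlog.le
  rw [ENNReal.ofReal_rpow_of_pos hδ0, ← ENNReal.ofReal_natCast,
    ← ENNReal.ofReal_mul (by positivity)]
  exact ENNReal.ofReal_le_one.2 hreal

theorem sum_ediam_ball_rpow_le {s : Finset X} {δ d : ℝ} (hd : 0 ≤ d) (hδ0 : 0 < δ) (hδ1 : δ < 1)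
    (hs : 0 < s.card) (h : Real.log s.card / -Real.log δ < d) :
    ∑ x : s, ediam (ball (x : X) δ) ^ d ≤ 2 ^ d :=
  calc ∑ x : s, ediam (ball (x : X) δ) ^ d ≤ ∑ _x : s, (2 * ENNReal.ofReal δ) ^ d :=
        Finset.sum_le_sum fun x _ => by
          gcongr
          rw [← eball_ofReal]
          exact ediam_eball_le
    _ = 2 ^ d * (s.card * ENNReal.ofReal δ ^ d) := by
        rw [Finset.sum_const, Finset.card_univ, Fintype.card_coe, nsmul_eq_mul,
          ENNReal.mul_rpow_of_nonneg _ _ hd]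
        ring
    _ ≤ 2 ^ d * 1 := by
        gcongr
        exact natCast_mul_ofReal_rpow_le_one hs hδ0 hδ1 h
    _ = 2 ^ d := mul_one _

theorem dimH_le_lowerBoxDim {Z : Set X} (hZb : TotallyBounded Z) (hZ : Z.Nonempty) :
    dimH Z ≤ lowerBoxDim Z := by
  borelize X
  refine dimH_le fun d hd => le_of_not_gt fun hlt => ?_
  have hd0 : (0 : ℝ) < d := NNReal.coe_pos.2 (ENNReal.coe_pos.1 (pos_of_gt hlt))
  obtain ⟨δ, hδlim, hδ⟩ := exists_seq_forall_of_frequently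
    ((frequently_lt_of_liminf_lt (by isBoundedDefault) hlt).and_eventually
      (Ioo_mem_nhdsGT (zero_lt_one' ℝ)))
  choose s hs hZs using fun j => hZb.exists_finset_card_eq_coverNum (hδ j).2.1
  have hδtend : Tendsto (fun j => 2 * ENNReal.ofReal (δ j)) atTop (𝓝 0) := by
    simpa using ENNReal.Tendsto.const_mul
      (ENNReal.tendsto_ofReal (tendsto_nhdsWithin_iff.1 hδlim).1) (Or.inr ofNat_ne_top)
  have hsum : ∀ j, ∑ x : s j, ediam (ball (x : X) (δ j)) ^ (d : ℝ) ≤ 2 ^ (d : ℝ) := fun j =>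
    sum_ediam_ball_rpow_le d.coe_nonneg (hδ j).2.1 (hδ j).2.2
      ((hs j).symm ▸ hZb.coverNum_pos hZ (hδ j).2.1)
      (hs j ▸ (ENNReal.ofReal_lt_ofReal_iff hd0).1 (by simpa using (hδ j).1))
  have hle := Measure.hausdorffMeasure_le_liminf_sum (d : ℝ) Z _ hδtend
    (fun j (x : s j) => ball (x : X) (δ j))
    (Eventually.of_forall fun j x => by rw [← eball_ofReal]; exact ediam_eball_le)
    (Eventually.of_forall fun j z hz => by simpa using hZs j hz)
  rw [hd] at hle
  exact (ENNReal.rpow_ne_top_of_nonneg d.coe_nonneg ofNat_ne_top)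
    (top_le_iff.1 (hle.trans (liminf_le_of_frequently_le' (Frequently.of_forall hsum))))

theorem lowerBoxDim_le_upperBoxDim (Z : Set X) : lowerBoxDim Z ≤ upperBoxDim Z :=
  liminf_le_limsup (by isBoundedDefault) (by isBoundedDefault)

end BoxDimension

theorem dimension_of_product_general
    {X Y : Type*} [MetricSpace X] [MetricSpace Y]
    (A : Set X) (B : Set Y) (hA : A.Nonempty) (hB : B.Nonempty)
    (hAb : TotallyBounded A) (hBb : TotallyBounded B) :
    dimH A + dimH B ≤ dimH (A ×ˢ B) ∧
    dimH (A ×ˢ B) ≤ lowerBoxDim (A ×ˢ B) ∧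
    lowerBoxDim (A ×ˢ B) ≤ upperBoxDim (A ×ˢ B) ∧
    upperBoxDim (A ×ˢ B) ≤ upperBoxDim A + upperBoxDim B :=
  ⟨dimH_add_le_dimH_prod hA hB hAb, dimH_le_lowerBoxDim (hAb.prod hBb) (hA.prod hB),
    lowerBoxDim_le_upperBoxDim _, upperBoxDim_prod_le hA hB hAb hBb⟩

/-- For subsets `A ⊆ X`, `B ⊆ Y` of metric spaces, the product `A × B` (with the max
metric on `X × Y`) satisfies
`dim_H A + dim_H B ≤ dim_H (A × B) ≤ underline dim_B (A × B) ≤ overline dim_B (A × B)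
  ≤ overline dim_B A + overline dim_B B`. -/
theorem dimension_of_product
    {X Y : Type*} [MetricSpace X] [MetricSpace Y]
    [MeasurableSpace X] [BorelSpace X] [SecondCountableTopology X]
    [MeasurableSpace Y] [BorelSpace Y] [SecondCountableTopology Y]
    (A : Set X) (B : Set Y) (hA : A.Nonempty) (hB : B.Nonempty)
    (hAb : TotallyBounded A) (hBb : TotallyBounded B) :
    dimH A + dimH B ≤ dimH (A ×ˢ B) ∧
    dimH (A ×ˢ B) ≤ lowerBoxDim (A ×ˢ B) ∧
    lowerBoxDim (A ×ˢ B) ≤ upperBoxDim (A ×ˢ B) ∧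
    upperBoxDim (A ×ˢ B) ≤ upperBoxDim A + upperBoxDim B :=
  dimension_of_product_general A B hA hB hAb hBb
end
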